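/- Let f be univalent on a neighborhood of the closure of a square S, with distortion bound D = max_{z,z'∈cl(S)} |f'(z)|/|f'(z')|. Let Γ₁ be a disk of diameter 1 and Γ₂ its concentric disk of diameter 1/2. If f(S) intersects both Γ₂ and the complement of Γ₁, then Γ₁ ∩ f(S) contains a disk of diameter at least 1/(20·D²). -/

import Mathlib

/-!
Let `M` be the maximum of `‖f'‖` on `cl S`; then `f` is `M`-Lipschitz on the convex square and
`‖f'‖ ≥ M / D` there. Points `p, q ∈ S` with `f p ∈ Γ₂` and `f q ∉ Γ₁` give `1/4 < M ‖q - p‖`,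
so the side of `S` is at least of order `1 / M` and `S` contains a disk of radius `ρ = 1 / (20 M)`
within `2ρ` of `p`. The image of the center of that disk is within `1/10` of `f p`, and since the
inverse of `f` is `D / M`-Lipschitz, the image of the disk contains the disk of radius
`(M / D) ρ = 1 / (20 D)` about it.
-/

open Metric

/-- An open axis-parallel square in ℂ with center `w` and side length `s`. -/
def openSquare (w : ℂ) (s : ℝ) : Set ℂ :=
  {z : ℂ | |(z - w).re| < s/2 ∧ |(z - w).im| < s/2}

open Set Filter Function Topology

section InverseFunction

variable {𝕜 : Type*} [RCLike 𝕜] {f f' : 𝕜 → 𝕜} {s : Set 𝕜} {b : ℝ}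

theorem IsOpen.image_of_hasStrictDerivAt (hs : IsOpen s)
    (hf : ∀ z ∈ s, HasStrictDerivAt f (f' z) z) (hf' : ∀ z ∈ s, f' z ≠ 0) :
    IsOpen (f '' s) := by
  rw [isOpen_iff_mem_nhds]
  rintro _ ⟨z, hz, rfl⟩
  rw [← (hf z hz).map_nhds_eq (hf' z hz)]
  exact image_mem_map (hs.mem_nhds hz)

theorem norm_invFunOn_sub_le (hs : IsOpen s) (hinj : InjOn f s)
    (hf : ∀ z ∈ s, HasStrictDerivAt f (f' z) z) (hb : 0 < b) (hf' : ∀ z ∈ s, b ≤ ‖f' z‖)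
    {t : Set 𝕜} (ht : Convex ℝ t) (hts : t ⊆ f '' s) {y₁ y₂ : 𝕜} (hy₁ : y₁ ∈ t) (hy₂ : y₂ ∈ t) :
    ‖invFunOn f s y₂ - invFunOn f s y₁‖ ≤ ‖y₂ - y₁‖ / b := by
  set g := invFunOn f s
  have hg : ∀ y ∈ t, HasDerivWithinAt g (f' (g y))⁻¹ t y := by
    rintro _ hy
    obtain ⟨x, hx, rfl⟩ := hts hy
    have hgf : ∀ᶠ z in 𝓝 x, g (f z) = z :=
      mem_of_superset (hs.mem_nhds hx) hinj.leftInvOn_invFunOn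
    rw [hgf.self_of_nhds]
    exact ((hf x hx).to_local_left_inverse
      (norm_pos_iff.1 (hb.trans_le (hf' x hx))) hgf).hasDerivAt.hasDerivWithinAt
  rw [div_eq_inv_mul]
  refine ht.norm_image_sub_le_of_norm_hasDerivWithin_le hg (fun y hy => ?_) hy₁ hy₂
  rw [norm_inv]
  exact inv_anti₀ hb (hf' _ (invFunOn_mem (hts hy)))

theorem ball_subset_image_ball {c : 𝕜} {ρ : ℝ} (hρ : 0 < ρ) (hb : 0 < b)
    (hinj : InjOn f (ball c ρ)) (hf : ∀ z ∈ ball c ρ, HasStrictDerivAt f (f' z) z)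
    (hf' : ∀ z ∈ ball c ρ, b ≤ ‖f' z‖) :
    ball (f c) (b * ρ) ⊆ f '' ball c ρ := by
  set V := f '' ball c ρ
  have hV : IsOpen V := isOpen_ball.image_of_hasStrictDerivAt hf
    fun z hz => norm_pos_iff.1 (hb.trans_le (hf' z hz))
  rcases Vᶜ.eq_empty_or_nonempty with hVc | hVc
  · simp [compl_empty_iff.1 hVc]
  have hcV : f c ∈ V := mem_image_of_mem f (mem_ball_self hρ)
  set R := infDist (f c) Vᶜ
  have hR : 0 < R := (hV.isClosed_compl.notMem_iff_infDist_pos hVc).1 (not_not.2 hcV)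
  refine (ball_subset_ball ?_).trans ball_infDist_compl_subset
  -- If `R < b ρ`, the inverse of `f` is `b⁻¹`-Lipschitz on `ball (f c) R`, so its closure lies
  -- in the compact set `f '' closedBall c (R / b) ⊆ f '' ball c ρ`; but it meets `(f '' ball c ρ)ᶜ`.
  by_contra! hRρ
  have hRbρ : R / b < ρ := (div_lt_iff₀' hb).2 hRρ
  have hgc : invFunOn f (ball c ρ) (f c) = c := hinj.leftInvOn_invFunOn (mem_ball_self hρ)
  have hK : IsClosed (f '' closedBall c (R / b)) :=
    ((isCompact_closedBall c _).image_of_continuousOn fun z hz =>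
      (hf z (closedBall_subset_ball hRbρ hz)).hasDerivAt.continuousAt.continuousWithinAt).isClosed
  have hball : ball (f c) R ⊆ f '' closedBall c (R / b) := by
    intro y hy
    have hyV : y ∈ V := ball_infDist_compl_subset hy
    refine ⟨invFunOn f (ball c ρ) y, ?_, invFunOn_eq hyV⟩
    have := norm_invFunOn_sub_le isOpen_ball hinj hf hb hf' (convex_ball _ _)
      ball_infDist_compl_subset (mem_ball_self hR) hy
    rw [hgc, ← dist_eq_norm, ← dist_eq_norm] at this
    exact this.trans (div_le_div_of_nonneg_right (mem_ball.1 hy).le hb.le)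
  obtain ⟨w₁, hw₁, hw₁R⟩ := hV.isClosed_compl.exists_infDist_eq_dist hVc (f c)
  have hw₁K : w₁ ∈ f '' closedBall c (R / b) := by
    refine closure_minimal hball hK ?_
    rw [closure_ball _ hR.ne', mem_closedBall, dist_comm, ← hw₁R]
  exact hw₁ (image_mono (closedBall_subset_ball hRbρ) hw₁K)

end InverseFunction

theorem Convex.ball_add_smul_sub_subset {E : Type*} [NormedAddCommGroup E] [NormedSpace ℝ E]
    {s : Set E} (hs : Convex ℝ s) {p w : E} {r t : ℝ} (hp : p ∈ s) (hw : ball w r ⊆ s)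
    (ht₀ : 0 < t) (ht₁ : t ≤ 1) : ball (p + t • (w - p)) (t * r) ⊆ s := by
  intro y hy
  set z := w + t⁻¹ • (y - (p + t • (w - p)))
  have hz : z ∈ ball w r := by
    rw [mem_ball, dist_eq_norm, add_sub_cancel_left, norm_smul, Real.norm_eq_abs,
      abs_of_pos (inv_pos.2 ht₀), inv_mul_lt_iff₀ ht₀, ← dist_eq_norm]
    exact hy
  have hyz : y = p + t • (z - p) := by
    rw [smul_sub, smul_add, smul_smul, mul_inv_cancel₀ ht₀.ne', one_smul]
    module
  rw [hyz]
  exact hs.add_smul_sub_mem hp (hw hz) ⟨ht₀.le, ht₁⟩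

section OpenSquare

variable {w : ℂ} {s : ℝ}

theorem openSquare_eq_reProdIm (w : ℂ) (s : ℝ) :
    openSquare w s = Ioo (w.re - s / 2) (w.re + s / 2) ×ℂ Ioo (w.im - s / 2) (w.im + s / 2) := by
  ext z
  simp only [openSquare, mem_ofPred_eq, Complex.mem_reProdIm, mem_Ioo, abs_lt, Complex.sub_re,
    Complex.sub_im]
  constructor <;> rintro ⟨⟨_, _⟩, _, _⟩ <;> refine ⟨⟨?_, ?_⟩, ?_, ?_⟩ <;> linarith

theorem convex_openSquare (w : ℂ) (s : ℝ) : Convex ℝ (openSquare w s) := by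
  rw [openSquare_eq_reProdIm]
  exact ((convex_Ioo _ _).linear_preimage Complex.reLm).inter
    ((convex_Ioo _ _).linear_preimage Complex.imLm)

theorem isCompact_closure_openSquare (w : ℂ) (s : ℝ) : IsCompact (closure (openSquare w s)) := by
  rw [openSquare_eq_reProdIm]
  exact ((isBounded_Ioo _ _).reProdIm (isBounded_Ioo _ _)).isCompact_closure

theorem ball_subset_openSquare (w : ℂ) (s : ℝ) : ball w (s / 2) ⊆ openSquare w s :=
  fun _ hz => ⟨(Complex.abs_re_le_norm _).trans_lt (mem_ball_iff_norm.1 hz),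
    (Complex.abs_im_le_norm _).trans_lt (mem_ball_iff_norm.1 hz)⟩

theorem isOpen_openSquare (w : ℂ) (s : ℝ) : IsOpen (openSquare w s) := by
  rw [openSquare_eq_reProdIm]
  exact isOpen_Ioo.reProdIm isOpen_Ioo

theorem openSquare_subset_ball (w : ℂ) (s : ℝ) : openSquare w s ⊆ ball w s := fun z hz => by
  rw [mem_ball_iff_norm]
  linarith [Complex.norm_le_abs_re_add_abs_im (z - w), hz.1, hz.2]

theorem exists_ball_subset_openSquare {p : ℂ} (hp : p ∈ openSquare w s) {ρ : ℝ} (hρ : 0 < ρ)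
    (hρs : ρ ≤ s / 2) : ∃ c, ball c ρ ⊆ openSquare w s ∧ ‖c - p‖ < 2 * ρ := by
  have hs : 0 < s := by linarith
  set t := 2 * ρ / s
  have htρ : t * (s / 2) = ρ := by simp only [t]; field_simp
  refine ⟨p + t • (w - p), ?_, ?_⟩
  · rw [← htρ]
    exact (convex_openSquare w s).ball_add_smul_sub_subset hp (ball_subset_openSquare w s)
      (by positivity) ((div_le_one hs).2 (by linarith))
  · rw [add_sub_cancel_left, norm_smul, Real.norm_eq_abs, abs_of_pos (by positivity),
      ← dist_eq_norm, dist_comm]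
    calc t * dist p w < t * s := mul_lt_mul_of_pos_left (openSquare_subset_ball w s hp)
          (by positivity)
      _ = 2 * ρ := by simp only [t]; field_simp

theorem exists_ball_subset_image_openSquare {f : ℂ → ℂ}
    (hf : DifferentiableOn ℂ f (openSquare w s)) (hinj : InjOn f (openSquare w s)) {M b : ℝ}
    (hM : 0 ≤ M) (hb : 0 < b)
    (hlip : ∀ x ∈ openSquare w s, ∀ y ∈ openSquare w s, ‖f y - f x‖ ≤ M * ‖y - x‖)
    (hlow : ∀ z ∈ openSquare w s, b ≤ ‖deriv f z‖) {p : ℂ} (hp : p ∈ openSquare w s)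
    {ρ : ℝ} (hρ : 0 < ρ) (hρs : ρ ≤ s / 2) :
    ∃ c, ‖f c - f p‖ ≤ 2 * M * ρ ∧ ball (f c) (b * ρ) ⊆ f '' openSquare w s := by
  obtain ⟨c, hcS, hcp⟩ := exists_ball_subset_openSquare hp hρ hρs
  refine ⟨c, ?_, ?_⟩
  · calc ‖f c - f p‖ ≤ M * ‖c - p‖ := hlip p hp c (hcS (mem_ball_self hρ))
      _ ≤ 2 * M * ρ := by nlinarith
  · refine (ball_subset_image_ball hρ hb (hinj.mono hcS) (fun z hz => ?_)
      (fun z hz => hlow z (hcS hz))).trans (image_mono hcS)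
    exact (hf.analyticAt ((isOpen_openSquare w s).mem_nhds (hcS hz))).hasStrictDerivAt

theorem exists_lipschitz_max_norm_deriv_openSquare {f : ℂ → ℂ} {U : Set ℂ} (hU : IsOpen U)
    (hSU : closure (openSquare w s) ⊆ U) (hf : DifferentiableOn ℂ f U)
    (hne : (openSquare w s).Nonempty) :
    ∃ z₀ ∈ closure (openSquare w s),
      ∀ x ∈ openSquare w s, ∀ y ∈ openSquare w s, ‖f y - f x‖ ≤ ‖deriv f z₀‖ * ‖y - x‖ := by
  obtain ⟨z₀, hz₀, hmax⟩ := (isCompact_closure_openSquare w s).exists_isMaxOn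
    hne.closure ((hf.deriv hU).continuousOn.mono hSU).norm
  exact ⟨z₀, hz₀, fun x hx y hy => (convex_openSquare w s).norm_image_sub_le_of_norm_deriv_le
    (fun z hz => hf.differentiableAt (hU.mem_nhds (hSU (subset_closure hz))))
    (fun z hz => hmax (subset_closure hz)) hx hy⟩

end OpenSquare

theorem image_contains_disk_in_annulus_general (w : ℂ) (s : ℝ)
    (U : Set ℂ) (hU : IsOpen U) (hSU : closure (openSquare w s) ⊆ U)
    (f : ℂ → ℂ) (hf : DifferentiableOn ℂ f U) (hinj : Set.InjOn f U)
    (D : ℝ) (hD : 1 ≤ D)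
    (hdist : ∀ z ∈ closure (openSquare w s), ∀ z' ∈ closure (openSquare w s),
      ‖deriv f z‖ ≤ D * ‖deriv f z'‖)
    (c₁ : ℂ)
    (h₂ : (f '' openSquare w s ∩ ball c₁ (1/4)).Nonempty)
    (h₁ : (f '' openSquare w s \ ball c₁ (1/2)).Nonempty) :
    ∃ c₃ : ℂ, ball c₃ (1 / (40 * D^2)) ⊆ ball c₁ (1/2) ∩ f '' openSquare w s := by
  set S := openSquare w s
  obtain ⟨_, ⟨p, hpS, rfl⟩, hp⟩ := h₂
  obtain ⟨_, ⟨q, hqS, rfl⟩, hq⟩ := h₁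
  have hSU' : S ⊆ U := subset_closure.trans hSU
  obtain ⟨z₀, hz₀, hlip⟩ := exists_lipschitz_max_norm_deriv_openSquare hU hSU hf ⟨p, hpS⟩
  set M := ‖deriv f z₀‖
  have hfar : 1 / 4 < M * ‖q - p‖ := by
    rw [mem_ball] at hp hq
    linarith [dist_triangle (f q) (f p) c₁, dist_eq_norm (f q) (f p), hlip p hpS q hqS]
  have hnear : ‖q - p‖ < 2 * s := by
    linarith [dist_triangle_right q p w, dist_eq_norm q p,
      mem_ball.1 (openSquare_subset_ball w s hpS), mem_ball.1 (openSquare_subset_ball w s hqS)]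
  have hM : 0 < M := by nlinarith [norm_nonneg (q - p)]
  obtain ⟨c, hcp, hc⟩ := exists_ball_subset_image_openSquare (hf.mono hSU') (hinj.mono hSU')
    hM.le (b := M / D) (by positivity) hlip
    (fun z hz => (div_le_iff₀' (by positivity)).2 (hdist z₀ hz₀ z (subset_closure hz))) hpS
    (ρ := 1 / (20 * M)) (by positivity) (by rw [div_le_iff₀ (by positivity)]; nlinarith)
  have hradius : 1 / (40 * D ^ 2) ≤ M / D * (1 / (20 * M)) := by
    rw [div_le_iff₀ (by positivity)]
    field_simp
    nlinarith
  refine ⟨f c, fun y hy => ⟨?_, hc (ball_subset_ball hradius hy)⟩⟩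
  have hyc : dist y (f c) < 1 / 40 := (mem_ball.1 hy).trans_le (by gcongr; nlinarith)
  have hcp' : dist (f c) (f p) ≤ 1 / 10 := by
    rw [dist_eq_norm]
    exact hcp.trans_eq (by field_simp; norm_num)
  rw [mem_ball] at hp ⊢
  linarith [dist_triangle4 y (f c) (f p) c₁]

/-- If `f` is univalent on a neighborhood of the closure of a square `S`, with distortion
bounded by `D` on `cl S`, and `f(S)` meets both the disk `Γ₂` of diameter `1/2` and the
complement of the concentric disk `Γ₁` of diameter `1`, then `Γ₁ ∩ f(S)` contains a disk
of diameter at least `1/(20 D²)`. -/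
theorem image_contains_disk_in_annulus (w : ℂ) (s : ℝ) (hs : 0 < s)
    (U : Set ℂ) (hU : IsOpen U) (hSU : closure (openSquare w s) ⊆ U)
    (f : ℂ → ℂ) (hf : DifferentiableOn ℂ f U) (hinj : Set.InjOn f U)
    (D : ℝ) (hD : 1 ≤ D)
    (hdist : ∀ z ∈ closure (openSquare w s), ∀ z' ∈ closure (openSquare w s),
      ‖deriv f z‖ ≤ D * ‖deriv f z'‖)
    (c₁ : ℂ)
    (h₂ : (f '' openSquare w s ∩ ball c₁ (1/4)).Nonempty)
    (h₁ : (f '' openSquare w s \ ball c₁ (1/2)).Nonempty) :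
    ∃ c₃ : ℂ, ball c₃ (1 / (40 * D^2)) ⊆ ball c₁ (1/2) ∩ f '' openSquare w s :=
  image_contains_disk_in_annulus_general w s U hU hSU f hf hinj D hD hdist c₁ h₂ h₁
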